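/- In the group IMG(z²+i) generated by the tree automorphisms a = (1,1)σ, b = (a,c), c = (b,1), the element bca has infinite order. In particular IMG(z²+i) is not a torsion group. -/
import Mathlib


/-- The generator `a = (1,1)σ` of `IMG(z²+i)`, acting on the binary rooted tree
whose vertices are finite binary words. -/
def aF : List Bool → List Bool
  | [] => []
  | x :: s => (!x) :: s

mutual
/-- The generator `b = (a, c)` of `IMG(z²+i)`. -/
def bF : List Bool → List Bool
  | [] => []
  | false :: s => false :: aF s
  | true :: s => true :: cF s
/-- The generator `c = (b, 1)` of `IMG(z²+i)`. -/
def cF : List Bool → List Bool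
  | [] => []
  | false :: s => false :: bF s
  | true :: s => true :: s
end

theorem aF_invol : ∀ s, aF (aF s) = s := by
  intro s; cases s <;> simp [aF]

theorem bcF_invol : ∀ s, bF (bF s) = s ∧ cF (cF s) = s := by
  intro s
  induction s with
  | nil => exact ⟨rfl, rfl⟩
  | cons x s ih =>
    cases x <;> exact ⟨by simp [bF, ih.1, ih.2, aF_invol], by simp [cF, ih.1]⟩

/-- `a` as a tree automorphism. -/
def aE : Equiv.Perm (List Bool) := ⟨aF, aF, aF_invol, aF_invol⟩
/-- `b` as a tree automorphism. -/
def bE : Equiv.Perm (List Bool) := ⟨bF, bF, fun s => (bcF_invol s).1, fun s => (bcF_invol s).1⟩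
/-- `c` as a tree automorphism. -/
def cE : Equiv.Perm (List Bool) := ⟨cF, cF, fun s => (bcF_invol s).2, fun s => (bcF_invol s).2⟩

namespace Stmt9Aux

/-- `g = bca`. -/
def g : Equiv.Perm (List Bool) := bE * cE * aE
/-- `h = abc`, a conjugate of `g`. -/
def h : Equiv.Perm (List Bool) := aE * bE * cE

lemma aE_sq : aE * aE = 1 := Equiv.ext aF_invol

lemma aE_inv : aE⁻¹ = aE := by
  rw [inv_eq_iff_mul_eq_one]; exact aE_sq

lemma h_conj : h = aE * g * aE⁻¹ := by
  rw [aE_inv, g, h]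
  simp [mul_assoc, aE_sq]

lemma h_pow (k : ℕ) : h ^ k = aE * g ^ k * aE⁻¹ := by
  rw [h_conj, conj_pow]

lemma g_false (s : List Bool) : g (false :: s) = true :: cF s := rfl

lemma g_true (s : List Bool) : g (true :: s) = false :: aF (bF s) := rfl

lemma g_sq_false (s : List Bool) : g (g (false :: s)) = false :: h s := rfl

lemma key (k : ℕ) : ∀ s, ((g * g) ^ k) (false :: s) = false :: (h ^ k) s := by
  induction k with
  | zero => intro s; simp
  | succ k ih =>
    intro s
    rw [pow_succ, pow_succ]
    simp only [Equiv.Perm.mul_apply]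
    rw [g_sq_false, ih (h s)]

lemma g_odd (m : ℕ) : (g ^ (2 * m + 1)) [false] = [true] := by
  induction m with
  | zero => simp [g_false, cF]
  | succ m ih =>
    have : 2 * (m + 1) + 1 = (2 * m + 1) + 2 := by ring
    rw [this, pow_add]
    simp only [Equiv.Perm.mul_apply]
    have h2 : (g ^ 2) [false] = [false] := rfl
    rw [h2, ih]

lemma g_pow_ne_one : ∀ m, 0 < m → g ^ m ≠ 1 := by
  intro m
  induction m using Nat.strong_induction_on with
  | _ m IH =>
    intro hm hg
    rcases Nat.even_or_odd m with he | ho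
    · obtain ⟨k, hk⟩ := he
      have hk2 : m = 2 * k := by omega
      have hkpos : 0 < k := by omega
      have hgk : (g * g) ^ k = 1 := by
        rw [← sq, ← pow_mul, ← hk2, hg]
      have hh : h ^ k = 1 := Equiv.ext fun s => by
        have := key k s
        rw [hgk] at this
        simpa using this.symm
      have : g ^ k = 1 := by
        have := h_pow k
        rw [hh] at this
        have h2 : aE * g ^ k * aE⁻¹ = 1 := this.symm
        rwa [mul_inv_eq_one, ← eq_inv_mul_iff_mul_eq, inv_mul_cancel] at h2
      exact IH k (by omega) hkpos this
    · obtain ⟨k, hk⟩ := ho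
      have : (g ^ m) [false] = [true] := by rw [hk]; exact g_odd k
      rw [hg] at this
      simp at this

lemma g_not_finOrder : ¬ IsOfFinOrder g := by
  rw [isOfFinOrder_iff_pow_eq_one]
  rintro ⟨n, hn, hgn⟩
  exact g_pow_ne_one n hn hgn

end Stmt9Aux

/-- In `IMG(z²+i)`, the element `bca` has infinite order; in particular
`IMG(z²+i)` is not a torsion group. -/
theorem stmt_9 :
    ¬ IsOfFinOrder (bE * cE * aE) ∧
    ∃ g ∈ Subgroup.closure ({aE, bE, cE} : Set (Equiv.Perm (List Bool))), ¬ IsOfFinOrder g := by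
  have hfin : ¬ IsOfFinOrder (bE * cE * aE) := Stmt9Aux.g_not_finOrder
  refine ⟨hfin, bE * cE * aE, ?_, hfin⟩
  have ha : aE ∈ Subgroup.closure ({aE, bE, cE} : Set (Equiv.Perm (List Bool))) :=
    Subgroup.subset_closure (by simp)
  have hb : bE ∈ Subgroup.closure ({aE, bE, cE} : Set (Equiv.Perm (List Bool))) :=
    Subgroup.subset_closure (by simp)
  have hc : cE ∈ Subgroup.closure ({aE, bE, cE} : Set (Equiv.Perm (List Bool))) :=
    Subgroup.subset_closure (by simp)
  exact mul_mem (mul_mem hb hc) ha
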